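/- Let (L, ≤, ⊤, 0, 1) be a strongly separated locality lattice. Then the closedness condition holds: a ∨ grt(a^⊤) = 1 for all a ∈ L (and a^⊤ = {0} if and only if a = 1). -/

import Mathlib

/-!
The polar of `a ⊔ grt(a^⊤)` is `{⊥}`: an element local to it is local to both `a` and
`grt(a^⊤)`, hence lies below `grt(a^⊤)` while meeting it trivially. The bipolar of
`a ⊔ grt(a^⊤)` is then all of `L`, so strong separation forces `a ⊔ grt(a^⊤) = ⊤`.
-/

namespace Locality

variable {L : Type*} [Lattice L] [BoundedOrder L] {T : L → L → Prop}

theorem rel_bot_of_nonempty {a : L} (hlow : IsLowerSet {x | T a x})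
    (hne : {x | T a x}.Nonempty) : T a ⊥ :=
  let ⟨_, hx⟩ := hne
  hlow bot_le hx

theorem eq_bot_of_rel_sup_greatest (hsym : ∀ a b : L, T a b → T b a)
    (hlow : ∀ a : L, IsLowerSet {x | T a x}) (hsep : ∀ a b : L, T a b → a ⊓ b = ⊥)
    {a g y : L} (hg : IsGreatest {x | T a x} g) (hy : T (a ⊔ g) y) : y = ⊥ := by
  have hya : T y a := hlow y le_sup_left (hsym _ _ hy)
  have hyg : T y g := hlow y le_sup_right (hsym _ _ hy)
  have hle : y ≤ g := hg.2 (hsym _ _ hya)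
  simpa [inf_eq_left.2 hle] using hsep _ _ hyg

theorem sup_greatest_eq_top (hsym : ∀ a b : L, T a b → T b a)
    (hlow : ∀ a : L, IsLowerSet {x | T a x}) (hsep : ∀ a b : L, T a b → a ⊓ b = ⊥)
    (htop : T ⊤ ⊥) {a g : L} (hg : IsGreatest {x | T a x} g)
    (hstrong : IsGreatest {x | ∀ y : L, T (a ⊔ g) y → T y x} (a ⊔ g)) : a ⊔ g = ⊤ := by
  refine top_le_iff.1 (hstrong.2 fun y hy => ?_)
  rw [eq_bot_of_rel_sup_greatest hsym hlow hsep hg hy]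
  exact hsym _ _ htop

theorem polar_top_eq_singleton_bot (hsep : ∀ a b : L, T a b → a ⊓ b = ⊥) (htop : T ⊤ ⊥) :
    {x | T ⊤ x} = ({⊥} : Set L) := by
  ext x
  refine ⟨fun hx => by simpa using hsep _ _ hx, ?_⟩
  rintro rfl
  exact htop

end Locality

open Locality in
theorem stmt_10_general {L : Type*} [Lattice L] [BoundedOrder L] (T : L → L → Prop)
    (hsym : ∀ a b : L, T a b → T b a)
    (hlow : ∀ a : L, IsLowerSet {x | T a x})
    (hsep : ∀ a b : L, T a b → a ⊓ b = ⊥)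
    (grt : L → L) (hgrt : ∀ a : L, IsGreatest {x | T a x} (grt a))
    (hstrong : ∀ a : L, IsGreatest {x | ∀ y : L, T a y → T y x} a) :
    (∀ a : L, a ⊔ grt a = ⊤) ∧
    (∀ a : L, {x | T a x} = ({⊥} : Set L) ↔ a = ⊤) := by
  have htop : T ⊤ ⊥ := rel_bot_of_nonempty (hlow ⊤) ⟨_, (hgrt ⊤).1⟩
  have hclosed (a : L) : a ⊔ grt a = ⊤ :=
    sup_greatest_eq_top hsym hlow hsep htop (hgrt a) (hstrong _)
  refine ⟨hclosed, fun a => ⟨fun hpolar => ?_, ?_⟩⟩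
  · have hgrt_bot : grt a ∈ ({⊥} : Set L) := hpolar ▸ (hgrt a).1
    rw [Set.mem_singleton_iff] at hgrt_bot
    simpa [hgrt_bot] using hclosed a
  · rintro rfl
    exact polar_top_eq_singleton_bot hsep htop

/-- A strongly separated locality lattice satisfies the closedness
condition `a ⊔ grt(a^⊤) = ⊤` (and `a^⊤ = {⊥} ↔ a = ⊤`). -/
theorem stmt_10 {L : Type*} [Lattice L] [BoundedOrder L] (T : L → L → Prop)
    (hsym : ∀ a b : L, T a b → T b a)
    (hlow : ∀ a : L, IsLowerSet {x | T a x})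
    (hjoin : ∀ a b c : L, T a b → T a c → T a (b ⊔ c))
    (hsep : ∀ a b : L, T a b → a ⊓ b = ⊥)
    (grt : L → L) (hgrt : ∀ a : L, IsGreatest {x | T a x} (grt a))
    (hstrong : ∀ a : L, IsGreatest {x | ∀ y : L, T a y → T y x} a) :
    (∀ a : L, a ⊔ grt a = ⊤) ∧
    (∀ a : L, {x | T a x} = ({⊥} : Set L) ↔ a = ⊤) :=
  stmt_10_general T hsym hlow hsep grt hgrt hstrong
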